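/- Let U be a deformable positively filtered R-algebra with deformations U_n := Σ_{i≥0} π^{in} F_iU (with filtration F_jU_n = Σ_{i=0}^j π^{in} F_iU). Then for all n, m ≥ 0, the m-th deformation of U_n equals U_{n+m}, i.e. (U_n)_m = U_{n+m}. -/

import Mathlib

section FilteredDeformable

variable {R U : Type*} [CommRing R] [Ring U] [Algebra R U]

/-- The image `r • N` of a submodule `N ⊆ U` under multiplication by the scalar `r ∈ R`. -/
noncomputable def smulSub (r : R) (N : Submodule R U) : Submodule R U :=
  Submodule.map (r • (LinearMap.id : U →ₗ[R] U)) N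

/-- A positively filtered `R`-algebra structure on `U`: an exhaustive, increasing,
multiplicative filtration `F₀U ⊆ F₁U ⊆ ⋯` with `1 ∈ F₀U`. -/
structure AlgebraFiltration (F : ℕ → Submodule R U) : Prop where
  mono : Monotone F
  one_mem : (1 : U) ∈ F 0
  mul_le : ∀ i j : ℕ, ∀ x ∈ F i, ∀ y ∈ F j, x * y ∈ F (i + j)
  exhaustive : ∀ u : U, ∃ i, u ∈ F i

/-- `F` shifted down one step, with `F₋₁ = ⊥`; used to express conditions on the associated
graded ring `gr U = ⊕ᵢ Fᵢ U / Fᵢ₋₁ U`. -/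
noncomputable def Fpred (F : ℕ → Submodule R U) : ℕ → Submodule R U :=
  fun i => if i = 0 then ⊥ else F (i - 1)

/-- `U` is deformable: the associated graded ring `gr U` is `π`-torsion-free
(equivalently, flat over the DVR `R`).  Concretely, for every `i` and `x ∈ Fᵢ U`, if
`π • x ∈ Fᵢ₋₁ U` then `x ∈ Fᵢ₋₁ U` (where `F₋₁ U = 0`). -/
def GrTorsionFree (π : R) (F : ℕ → Submodule R U) : Prop :=
  ∀ i : ℕ, ∀ x ∈ F i, π • x ∈ Fpred F i → x ∈ Fpred F i

/-- The associated graded ring `gr U` is commutative: commutators drop filtration degree. -/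
def GrCommutative (F : ℕ → Submodule R U) : Prop :=
  ∀ i j : ℕ, ∀ x ∈ F i, ∀ y ∈ F j, x * y - y * x ∈ Fpred F (i + j)

end FilteredDeformable

/-! With `a = π ^ n` and `b = π ^ m` the identity is formal: the summand `b ^ j • a ^ i • Fᵢ` of the left-hand side
(with `i ≤ j`) equals `b ^ (j - i) • (a * b) ^ i • Fᵢ ⊆ (a * b) ^ i • Fᵢ`, and the summand
`(a * b) ^ i • Fᵢ` of the right-hand side is the `j = i` summand of the left-hand side. -/

section SmulSub

variable {R U : Type*} [CommRing R] [Ring U] [Algebra R U]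

lemma smulSub_le_self (r : R) (N : Submodule R U) : smulSub r N ≤ N := by
  rintro _ ⟨x, hx, rfl⟩
  exact N.smul_mem r hx

lemma smulSub_mono (r : R) {N N' : Submodule R U} (h : N ≤ N') : smulSub r N ≤ smulSub r N' :=
  Submodule.map_mono h

lemma smulSub_smulSub (a b : R) (N : Submodule R U) :
    smulSub a (smulSub b N) = smulSub (a * b) N := by
  rw [smulSub, smulSub, smulSub, ← Submodule.map_comp]
  congr 1
  ext x
  simp [mul_smul]

lemma smulSub_iSup {ι : Sort*} (r : R) (N : ι → Submodule R U) :
    smulSub r (⨆ i, N i) = ⨆ i, smulSub r (N i) :=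
  Submodule.map_iSup _ _

lemma iSup_smulSub_pow_biSup_smulSub_pow (a b : R) (F : ℕ → Submodule R U) :
    (⨆ j : ℕ, smulSub (b ^ j) (⨆ i : ℕ, ⨆ _ : i ≤ j, smulSub (a ^ i) (F i))) =
      ⨆ i : ℕ, smulSub ((a * b) ^ i) (F i) := by
  apply le_antisymm
  · refine iSup_le fun j => ?_
    simp only [smulSub_iSup]
    refine iSup₂_le fun i hij => le_iSup_of_le i ?_
    have hpow : b ^ j * a ^ i = b ^ (j - i) * (a * b) ^ i := by
      rw [← Nat.sub_add_cancel hij, pow_add, Nat.add_sub_cancel]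
      ring
    rw [smulSub_smulSub, hpow, ← smulSub_smulSub]
    exact smulSub_le_self _ _
  · refine iSup_le fun i => le_iSup_of_le i ?_
    rw [mul_pow, mul_comm, ← smulSub_smulSub]
    exact smulSub_mono _ (le_iSup₂_of_le i le_rfl le_rfl)

end SmulSub

theorem deformation_comp_general
    {R U : Type*} [CommRing R]
    (π : R)
    [Ring U] [Algebra R U]
    (F : ℕ → Submodule R U) (n m : ℕ) :
    (⨆ j : ℕ, smulSub (π ^ (j * m))
        (⨆ i : ℕ, ⨆ _ : i ≤ j, smulSub (π ^ (i * n)) (F i))) =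
      ⨆ i : ℕ, smulSub (π ^ (i * (n + m))) (F i) := by
  simp only [pow_mul']
  rw [pow_add]
  exact iSup_smulSub_pow_biSup_smulSub_pow (π ^ n) (π ^ m) F

/-- Let `U` be a deformable positively filtered `R`-algebra over a complete
DVR `R` with deformations `U_n := Σ_{i≥0} π^{in} Fᵢ U`, where `U_n` carries the filtration
`F_j U_n = Σ_{i=0}^{j} π^{in} Fᵢ U`.  Then for all `n, m ≥ 0` the `m`-th deformation of
`U_n` equals `U_{n+m}`, i.e. `(U_n)_m = Σ_j π^{jm} F_j U_n = Σ_i π^{i(n+m)} Fᵢ U = U_{n+m}`. -/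
theorem deformation_comp
    {R U : Type*} [CommRing R] [IsDomain R] [IsDiscreteValuationRing R]
    (π : R) (hπ0 : π ≠ 0) (hπu : ¬IsUnit π)
    [IsAdicComplete (Ideal.span {π}) R]
    [Ring U] [Algebra R U]
    (F : ℕ → Submodule R U) (hF : AlgebraFiltration F)
    (hdef : GrTorsionFree π F) (n m : ℕ) :
    (⨆ j : ℕ, smulSub (π ^ (j * m))
        (⨆ i : ℕ, ⨆ _ : i ≤ j, smulSub (π ^ (i * n)) (F i))) =
      ⨆ i : ℕ, smulSub (π ^ (i * (n + m))) (F i) :=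
  deformation_comp_general π F n m
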